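/- Let R, Rc: R → SO(3) be differentiable curves with body angular velocities Ω, Ωc defined by Ṙ = R Ω̂ and Ṙc = Rc Ω̂c. Define e_R = (1/2)(Rc^T R - R^T Rc)^∨, e_Ω = Ω - R^T Rc Ωc, and Ψ(R,Rc) = (1/2) tr(I - Rc^T R). Then d/dt Ψ(R, Rc) = e_R · e_Ω. -/

import Mathlib

/-! With `Q = Rcᵀ R`, the product rule gives `Ψ̇ = -½ tr(Q Ω̂ - Ω̂c Q)`, and the pairing
`tr(Q x̂) = -x ⬝ (Q - Qᵀ)^∨` turns this into `e_R ⬝ (Ω - Ωc)`. A rotation fixes its own axis: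
from `Q x̂ Qᵀ = (Q x)^` (which needs `det Q = 1`) one gets `Q (Q - Qᵀ)^∨ = (Q - Qᵀ)^∨`, hence
`e_R ⬝ Qᵀ Ωc = e_R ⬝ Ωc`, and the derivative is `e_R ⬝ e_Ω`. -/

open Matrix
open scoped Matrix

attribute [local instance] Matrix.normedAddCommGroup Matrix.normedSpace

/-- The hat map sending `x ∈ ℝ³` to the skew-symmetric matrix `x̂` with `x̂ y = x × y`. -/
def hat (x : Fin 3 → ℝ) : Matrix (Fin 3) (Fin 3) ℝ :=
  !![0, -x 2, x 1; x 2, 0, -x 0; -x 1, x 0, 0]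

/-- The vee map, inverse of the hat map. -/
def vee (M : Matrix (Fin 3) (Fin 3) ℝ) : Fin 3 → ℝ := ![M 2 1, M 0 2, M 1 0]

section MatrixCalculus

variable {m n p : Type*} {t : ℝ}

theorem HasDerivAt.matrix_transpose [Fintype m] [Fintype n] {A : ℝ → Matrix m n ℝ}
    {A' : Matrix m n ℝ} (hA : HasDerivAt A A' t) : HasDerivAt (fun s => (A s)ᵀ) A'ᵀ t :=
  hasDerivAt_pi.2 fun j => hasDerivAt_pi.2 fun i => hasDerivAt_pi.1 (hasDerivAt_pi.1 hA i) j

theorem HasDerivAt.matrix_mul [Fintype n] [Fintype p] {A : ℝ → Matrix m n ℝ} {A' : Matrix m n ℝ}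
    {B : ℝ → Matrix n p ℝ} {B' : Matrix n p ℝ} (hA : HasDerivAt A A' t) (hB : HasDerivAt B B' t) :
    HasDerivAt (fun s => A s * B s) (A' * B t + A t * B') t := by
  have hAij : ∀ i j, HasDerivAt (fun s => A s i j) (A' i j) t :=
    fun i j => hasDerivAt_pi.1 (hasDerivAt_pi.1 hA i) j
  have hBij : ∀ i j, HasDerivAt (fun s => B s i j) (B' i j) t :=
    fun i j => hasDerivAt_pi.1 (hasDerivAt_pi.1 hB i) j
  refine hasDerivAt_pi.2 fun i => hasDerivAt_pi.2 fun k => ?_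
  have hsum := HasDerivAt.fun_sum (u := Finset.univ) fun j _ => (hAij i j).fun_mul (hBij j k)
  simpa only [Matrix.add_apply, mul_apply, ← Finset.sum_add_distrib] using hsum

theorem HasDerivAt.matrix_trace [Fintype n] {A : ℝ → Matrix n n ℝ} {A' : Matrix n n ℝ}
    (hA : HasDerivAt A A' t) : HasDerivAt (fun s => (A s).trace) A'.trace t :=
  HasDerivAt.fun_sum fun i _ => hasDerivAt_pi.1 (hasDerivAt_pi.1 hA i) i

end MatrixCalculus

theorem vee_hat (x : Fin 3 → ℝ) : vee (hat x) = x := by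
  ext i; fin_cases i <;> simp [vee, hat]

theorem hat_injective : Function.Injective hat :=
  Function.LeftInverse.injective vee_hat

theorem hat_vee_of_transpose_eq_neg {M : Matrix (Fin 3) (Fin 3) ℝ} (hM : Mᵀ = -M) :
    hat (vee M) = M := by
  have h : ∀ i j, M i j = -M j i := fun i j => by simpa using congrFun (congrFun hM j) i
  ext i j
  fin_cases i <;> fin_cases j <;> simp [hat, vee] <;>
    linarith [h 0 0, h 1 1, h 2 2, h 0 1, h 0 2, h 1 2]

theorem hat_transpose (x : Fin 3 → ℝ) : (hat x)ᵀ = -hat x := by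
  ext i j; fin_cases i <;> fin_cases j <;> simp [hat]

theorem trace_mul_hat (Q : Matrix (Fin 3) (Fin 3) ℝ) (x : Fin 3 → ℝ) :
    (Q * hat x).trace = -(x ⬝ᵥ vee (Q - Qᵀ)) := by
  simp only [trace, diag_apply, mul_apply, dotProduct, Fin.sum_univ_three, hat, vee, of_apply,
    cons_val', cons_val_fin_one, cons_val_zero, cons_val_one, cons_val, Matrix.sub_apply,
    transpose_apply]
  ring

theorem trace_transpose_mul_hat_add_transpose_mul_mul_hat (A B : Matrix (Fin 3) (Fin 3) ℝ)
    (x y : Fin 3 → ℝ) :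
    ((B * hat y)ᵀ * A + Bᵀ * (A * hat x)).trace = -(vee (Bᵀ * A - (Bᵀ * A)ᵀ) ⬝ᵥ (x - y)) := by
  rw [transpose_mul, hat_transpose, Matrix.neg_mul, Matrix.neg_mul, Matrix.mul_assoc,
    ← Matrix.mul_assoc Bᵀ, trace_add, trace_neg, trace_mul_comm, trace_mul_hat, trace_mul_hat,
    dotProduct_sub, dotProduct_comm x, dotProduct_comm y]
  ring

theorem transpose_mul_hat_mulVec_mul (Q : Matrix (Fin 3) (Fin 3) ℝ) (x : Fin 3 → ℝ) :
    Qᵀ * hat (Q *ᵥ x) * Q = Q.det • hat x := by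
  ext i j
  fin_cases i <;> fin_cases j <;>
    simp [hat, mul_apply, mulVec, dotProduct, Fin.sum_univ_three, det_fin_three] <;> ring

section Rotation

variable {Q : Matrix (Fin 3) (Fin 3) ℝ}

theorem hat_mulVec_eq_mul_hat_mul_transpose (hQ : Qᵀ * Q = 1) (hdet : Q.det = 1)
    (x : Fin 3 → ℝ) : hat (Q *ᵥ x) = Q * hat x * Qᵀ := by
  have hQ' : Q * Qᵀ = 1 := mul_eq_one_comm.mp hQ
  calc hat (Q *ᵥ x) = (Q * Qᵀ) * hat (Q *ᵥ x) * (Q * Qᵀ) := by rw [hQ', one_mul, mul_one]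
    _ = Q * (Qᵀ * hat (Q *ᵥ x) * Q) * Qᵀ := by simp only [Matrix.mul_assoc]
    _ = Q * hat x * Qᵀ := by rw [transpose_mul_hat_mulVec_mul, hdet, one_smul]

theorem mulVec_vee_sub_transpose (hQ : Qᵀ * Q = 1) (hdet : Q.det = 1) :
    Q *ᵥ vee (Q - Qᵀ) = vee (Q - Qᵀ) := by
  have hQ' : Q * Qᵀ = 1 := mul_eq_one_comm.mp hQ
  have hskew : (Q - Qᵀ)ᵀ = -(Q - Qᵀ) := by rw [transpose_sub, transpose_transpose, neg_sub]
  apply hat_injective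
  rw [hat_mulVec_eq_mul_hat_mul_transpose hQ hdet, hat_vee_of_transpose_eq_neg hskew,
    Matrix.mul_sub, Matrix.sub_mul, Matrix.mul_assoc Q Q, hQ', mul_one, one_mul]

end Rotation

/-- For differentiable curves `R, Rc` in `SO(3)` with `Ṙ = R Ω̂`, `Ṙc = Rc Ω̂c`,
the attitude error function `Ψ = (1/2) tr(I - RcᵀR)` satisfies `Ψ̇ = e_R ⋅ e_Ω`. -/
theorem stmt4 (R Rc : ℝ → Matrix (Fin 3) (Fin 3) ℝ) (Ω Ωc : ℝ → Fin 3 → ℝ) (t : ℝ)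
    (hSO : ∀ s, (R s)ᵀ * R s = 1 ∧ (R s).det = 1)
    (hSOc : ∀ s, (Rc s)ᵀ * Rc s = 1 ∧ (Rc s).det = 1)
    (hR : ∀ s, HasDerivAt R (R s * hat (Ω s)) s)
    (hRc : ∀ s, HasDerivAt Rc (Rc s * hat (Ωc s)) s) :
    let eR : Fin 3 → ℝ := (1 / 2 : ℝ) • vee ((Rc t)ᵀ * R t - (R t)ᵀ * Rc t)
    let eΩ : Fin 3 → ℝ := Ω t - ((R t)ᵀ * Rc t).mulVec (Ωc t)
    HasDerivAt (fun s => (1 / 2) * ((1 : Matrix (Fin 3) (Fin 3) ℝ) - (Rc s)ᵀ * R s).trace)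
      (eR ⬝ᵥ eΩ) t := by
  dsimp only
  have hderiv := (((hRc t).matrix_transpose.matrix_mul (hR t)).const_sub 1).matrix_trace.const_mul
    (1 / 2 : ℝ)
  rw [trace_neg, trace_transpose_mul_hat_add_transpose_mul_mul_hat] at hderiv
  refine hderiv.congr_deriv ?_
  have hQ : ((Rc t)ᵀ * R t)ᵀ * ((Rc t)ᵀ * R t) = 1 := by
    rw [transpose_mul, transpose_transpose, Matrix.mul_assoc, ← Matrix.mul_assoc (Rc t),
      mul_eq_one_comm.mp (hSOc t).1, one_mul, (hSO t).1]
  have hdet : ((Rc t)ᵀ * R t).det = 1 := by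
    rw [det_mul, det_transpose, (hSOc t).2, (hSO t).2, one_mul]
  have hQT : (R t)ᵀ * Rc t = ((Rc t)ᵀ * R t)ᵀ := by rw [transpose_mul, transpose_transpose]
  rw [hQT]
  generalize (Rc t)ᵀ * R t = Q at hQ hdet ⊢
  rw [neg_neg, smul_dotProduct, smul_eq_mul, dotProduct_sub _ (Ω t) (Qᵀ *ᵥ Ωc t),
    dotProduct_mulVec, vecMul_transpose, mulVec_vee_sub_transpose hQ hdet, dotProduct_sub]
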